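/- Let b, b′ be pre-blowup operators on S. Then the composition bb′ is a pre-blowup operator on S. Consequently, S admits an idempotent pre-blowup operator (a blowup operator), namely the idempotent power b^ω of any pre-blowup operator under composition. -/

import Mathlib

open Pointwise

/-- A variety of finite groups: a class of finite groups closed under finite direct
products, subgroups and homomorphic images. -/
structure GroupVariety : Type 1 where
  mem : ∀ (G : Type) [Group G] [Finite G], Prop
  closed_prod : ∀ (G H : Type) [Group G] [Finite G] [Group H] [Finite H],
    mem G → mem H → mem (G × H)
  closed_sub : ∀ (G : Type) [Group G] [Finite G] (K : Subgroup G), mem G → mem K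
  closed_hom : ∀ (G H : Type) [Group G] [Finite G] [Group H] [Finite H] (f : G →* H),
    Function.Surjective f → mem G → mem H

/-- The 𝐇-kernel of a finite group: the smallest normal subgroup whose quotient
belongs to the class `P` of finite groups. -/
def HKer (P : ∀ (G : Type) [Group G] [Finite G], Prop) (G : Type) [Group G] [Finite G] :
    Subgroup G :=
  sInf {N : Subgroup G |
    ∃ h : N.Normal, @P (G ⧸ N) (@QuotientGroup.Quotient.group G _ N h) inferInstance}

/-- Green's preorder `x ≤_𝓛 y`, i.e. `x ∈ S¹y`. -/
def leL {S : Type} [Semigroup S] (x y : S) : Prop := x = y ∨ ∃ a, x = a * y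
/-- Green's preorder `x ≤_𝓡 y`, i.e. `x ∈ yS¹`. -/
def leR {S : Type} [Semigroup S] (x y : S) : Prop := x = y ∨ ∃ a, x = y * a
/-- Green's relation `𝓛`. -/
def eqL {S : Type} [Semigroup S] (x y : S) : Prop := leL x y ∧ leL y x
/-- Green's relation `𝓡`. -/
def eqR {S : Type} [Semigroup S] (x y : S) : Prop := leR x y ∧ leR y x
/-- Green's preorder `≤_𝓗`. -/
def leH {S : Type} [Semigroup S] (x y : S) : Prop := leL x y ∧ leR x y
/-- Green's relation `𝓗`. -/
def eqH {S : Type} [Semigroup S] (x y : S) : Prop := eqL x y ∧ eqR x y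
/-- The 𝓗-class of `x`. -/
def HClass {S : Type} [Semigroup S] (x : S) : Set S := {y | eqH y x}
/-- The 𝓛-class of `x`. -/
def LClass {S : Type} [Semigroup S] (x : S) : Set S := {y | eqL y x}

/-- The right stabilizer of a subset of `S`, as a submonoid of `S¹ = WithOne S`. -/
def stRsub {S : Type} [Semigroup S] (X : Set S) : Submonoid (WithOne S) where
  carrier := {u | ∀ x ∈ X, ∃ y ∈ X, (↑x * u : WithOne S) = ↑y}
  one_mem' := fun x hx => ⟨x, hx, mul_one _⟩
  mul_mem' := by
    intro u v hu hv x hx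
    obtain ⟨y, hy, hxy⟩ := hu x hx
    obtain ⟨z, hz, hyz⟩ := hv y hy
    exact ⟨z, hz, by rw [← mul_assoc, hxy, hyz]⟩

/-- Right multiplication by an element of `S¹ = WithOne S`, as a map `S → S`. -/
noncomputable def actW {S : Type} [Semigroup S] (q : S) (m : WithOne S) : S :=
  @dite _ (m = 1) (Classical.dec _) (fun _ => q) (fun h => q * WithOne.unone h)

/-- `s` is an 𝐇-element: the right Schützenberger group of its 𝓗-class lies in `V`;
equivalently, there is a group `G` in `V` and a surjection from the right stabilizer of
`H_s` onto `G` whose kernel is exactly the kernel of the action on `H_s`. -/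
def IsHElement (V : GroupVariety) {S : Type} [Semigroup S] (s : S) : Prop :=
  ∃ (G : Type) (iG : Group G) (fG : Finite G), @GroupVariety.mem V G iG fG ∧
    ∃ f : ↥(stRsub (HClass s)) →* G, Function.Surjective f ∧
      ∀ u v : ↥(stRsub (HClass s)),
        f u = f v ↔ ∀ x ∈ HClass s, ((↑x : WithOne S) * ↑u) = ↑x * ↑v

/-- A subset of `2^T` is H̄-saturated: a subsemigroup, downward closed, and closed
under taking unions of 𝐇-kernels of its subgroups. -/
def Saturated (V : GroupVariety) (T : Type) [Semigroup T] (A : Set (Set T)) : Prop :=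
  (∀ X ∈ A, ∀ Y ∈ A, X * Y ∈ A) ∧
  (∀ X ∈ A, ∀ Y : Set T, Y ⊆ X → Y ∈ A) ∧
  (∀ (G : Type) (iG : Group G) (fG : Finite G) (ι : @MulHom G (Set T) _ _),
      Function.Injective ι → (∀ g : G, ι g ∈ A) →
      (⋃ g ∈ (@HKer V.mem G iG fG : Subgroup G), ι g) ∈ A)

/-- The H̄-saturation of the set of singletons in `2^T`. -/
def SatSet (V : GroupVariety) (T : Type) [Semigroup T] [Finite T] : Set (Set T) :=
  ⋂₀ {A | Saturated V T A ∧ ∀ t : T, {t} ∈ A}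

/-- The H̄-saturation `S = Sat_H̄(Tη)` of the singletons, as a subsemigroup of `2^T`. -/
def SatSub (V : GroupVariety) (T : Type) [Semigroup T] [Finite T] : Subsemigroup (Set T) where
  carrier := SatSet V T
  mul_mem' := by
    intro a b ha hb
    rw [SatSet, Set.mem_sInter] at *
    exact fun A hA => hA.1.1 a (ha A hA) b (hb A hA)

/-- A pre-blowup operator on `S = Sat_H̄(Tη)`: (i) on each 𝓛-class it is given by right
multiplication by some `m_L ∈ S¹`; (ii) it fixes the 𝐇-elements and moves every other
element strictly 𝓗-downward; (iii) it enlarges each element (as a subset of `T`). -/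
def IsPreBlowup (V : GroupVariety) (T : Type) [Semigroup T] [Finite T]
    (b : ↥(SatSub V T) → ↥(SatSub V T)) : Prop :=
  (∀ s : ↥(SatSub V T), ∃ m : WithOne ↥(SatSub V T), ∀ s', eqL s' s → b s' = actW s' m) ∧
  (∀ s : ↥(SatSub V T), IsHElement V s → b s = s) ∧
  (∀ s : ↥(SatSub V T), ¬ IsHElement V s → leH (b s) s ∧ ¬ eqH (b s) s) ∧
  (∀ s : ↥(SatSub V T), (↑s : Set T) ⊆ (↑(b s) : Set T))

/-!
On an 𝓛-class `L`, `b` is right multiplication by `m_L`, and right multiplication preserves `𝓛`,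
so `b` maps `L` into a single 𝓛-class `L'`; then `b' ∘ b` is right multiplication by
`m_L m'_{L'}` on `L`. Strict `𝓗`-descent outside the 𝐇-elements and enlargement are clearly
stable under composition. Since `S ⊆ 2^T` is finite, so is the monoid of self-maps of `S`, and
some positive power of any element of a finite monoid is idempotent.
-/

section Green

variable {S : Type} [Semigroup S]

theorem leL_trans {x y z : S} (hxy : leL x y) (hyz : leL y z) : leL x z := by
  rcases hxy with rfl | ⟨a, rfl⟩ <;> rcases hyz with rfl | ⟨c, rfl⟩
  · exact Or.inl rfl
  · exact Or.inr ⟨c, rfl⟩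
  · exact Or.inr ⟨a, rfl⟩
  · exact Or.inr ⟨a * c, (mul_assoc _ _ _).symm⟩

theorem leR_trans {x y z : S} (hxy : leR x y) (hyz : leR y z) : leR x z := by
  rcases hxy with rfl | ⟨a, rfl⟩ <;> rcases hyz with rfl | ⟨c, rfl⟩
  · exact Or.inl rfl
  · exact Or.inr ⟨c, rfl⟩
  · exact Or.inr ⟨a, rfl⟩
  · exact Or.inr ⟨c * a, mul_assoc _ _ _⟩

theorem leH_trans {x y z : S} (hxy : leH x y) (hyz : leH y z) : leH x z :=
  ⟨leL_trans hxy.1 hyz.1, leR_trans hxy.2 hyz.2⟩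

theorem eqL_refl (x : S) : eqL x x := ⟨Or.inl rfl, Or.inl rfl⟩

theorem not_eqH_of_leH_of_not_eqH {x y z : S} (hzy : leH z y) (hyx : leH y x)
    (hyx' : ¬eqH y x) : ¬eqH z x := fun hzx =>
  have hxy : leH x y := leH_trans ⟨hzx.1.2, hzx.2.2⟩ hzy
  hyx' ⟨⟨hyx.1, hxy.1⟩, ⟨hyx.2, hxy.2⟩⟩

theorem actW_one (q : S) : actW q (1 : WithOne S) = q := dif_pos rfl

theorem actW_coe (q a : S) : actW q (a : WithOne S) = q * a := by
  rw [actW, dif_neg WithOne.coe_ne_one]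
  rfl

theorem actW_actW (q : S) (m m' : WithOne S) : actW (actW q m) m' = actW q (m * m') := by
  induction m using WithOne.recOneCoe with
  | one => rw [actW_one, one_mul]
  | coe a =>
    induction m' using WithOne.recOneCoe with
    | one => rw [actW_one, mul_one]
    | coe c => rw [actW_coe, actW_coe, ← WithOne.coe_mul, actW_coe, mul_assoc]

theorem leL_actW {q' q : S} (h : leL q' q) (m : WithOne S) : leL (actW q' m) (actW q m) := by
  induction m using WithOne.recOneCoe with
  | one => rwa [actW_one, actW_one]
  | coe a =>
    rw [actW_coe, actW_coe]
    rcases h with rfl | ⟨c, rfl⟩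
    · exact Or.inl rfl
    · exact Or.inr ⟨c, mul_assoc _ _ _⟩

theorem eqL_actW {q' q : S} (h : eqL q' q) (m : WithOne S) : eqL (actW q' m) (actW q m) :=
  ⟨leL_actW h.1 m, leL_actW h.2 m⟩

end Green

theorem pow_add_mul_eq_pow_of_pow_add_eq {M : Type*} [Monoid M] {x : M} {i p : ℕ}
    (h : x ^ (i + p) = x ^ i) (k m : ℕ) (hik : i ≤ k) : x ^ (k + m * p) = x ^ k := by
  obtain ⟨d, rfl⟩ := Nat.exists_eq_add_of_le hik
  induction m with
  | zero => simp
  | succ m ih =>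
    calc x ^ (i + d + (m + 1) * p) = x ^ (i + p) * x ^ (d + m * p) := by
          rw [← pow_add]; congr 1; ring
      _ = x ^ (i + d + m * p) := by rw [h, ← pow_add, add_assoc]
      _ = x ^ (i + d) := ih

theorem exists_pos_isIdempotentElem_pow {M : Type*} [Monoid M] [Finite M] (x : M) :
    ∃ n, 0 < n ∧ IsIdempotentElem (x ^ n) := by
  obtain ⟨i, j, hij, hpow⟩ := Finite.exists_ne_map_eq_of_infinite (x ^ · : ℕ → M)
  wlog hlt : i < j generalizing i j
  · exact this j i hij.symm hpow.symm (hij.lt_or_gt.resolve_left hlt)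
  set p := j - i
  have hcycle : x ^ (i + p) = x ^ i := by rw [Nat.add_sub_cancel' hlt.le]; exact hpow.symm
  have hp : 0 < p := Nat.sub_pos_of_lt hlt
  -- `n` is a multiple of the period `p` that lies beyond the preperiod `i`
  refine ⟨(i + 1) * p, by positivity, ?_⟩
  have hin : i ≤ (i + 1) * p := le_trans (Nat.le_succ i) (Nat.le_mul_of_pos_right _ hp)
  rw [IsIdempotentElem, ← pow_add, pow_add_mul_eq_pow_of_pow_add_eq hcycle _ _ hin]

section PreBlowup

variable {V : GroupVariety} {T : Type} [Semigroup T] [Finite T]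

theorem IsPreBlowup.comp {b b' : ↥(SatSub V T) → ↥(SatSub V T)} (hb : IsPreBlowup V T b)
    (hb' : IsPreBlowup V T b') : IsPreBlowup V T (b' ∘ b) := by
  obtain ⟨hbL, hbH, hbdesc, hbsub⟩ := hb
  obtain ⟨hbL', hbH', hbdesc', hbsub'⟩ := hb'
  refine ⟨fun s => ?_, fun s hs => ?_, fun s hs => ?_, fun s => (hbsub s).trans (hbsub' (b s))⟩
  · obtain ⟨m, hm⟩ := hbL s
    obtain ⟨m', hm'⟩ := hbL' (b s)
    refine ⟨m * m', fun s' hs' => ?_⟩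
    have hbs' : eqL (b s') (b s) := by
      rw [hm s' hs', hm s (eqL_refl s)]
      exact eqL_actW hs' m
    rw [Function.comp_apply, hm' _ hbs', hm s' hs', actW_actW]
  · rw [Function.comp_apply, hbH s hs, hbH' s hs]
  · obtain ⟨hle, hne⟩ := hbdesc s hs
    rw [Function.comp_apply]
    by_cases hbs : IsHElement V (b s)
    · rw [hbH' _ hbs]
      exact ⟨hle, hne⟩
    · have hle' := (hbdesc' _ hbs).1
      exact ⟨leH_trans hle' hle, not_eqH_of_leH_of_not_eqH hle' hle hne⟩

theorem IsPreBlowup.iterate {b : ↥(SatSub V T) → ↥(SatSub V T)} (hb : IsPreBlowup V T b) :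
    ∀ {n : ℕ}, 0 < n → IsPreBlowup V T b^[n]
  | 1, _ => hb
  | n + 2, _ => by
    rw [Function.iterate_succ']
    exact (hb.iterate n.succ_pos).comp hb

end PreBlowup

/-- Pre-blowup operators are closed under composition, and hence `S` admits an
idempotent pre-blowup operator (a blowup operator), namely an idempotent power of any
pre-blowup operator. -/
theorem blowup_exists (V : GroupVariety) (T : Type) [Semigroup T] [Finite T] :
    (∀ b b' : ↥(SatSub V T) → ↥(SatSub V T), IsPreBlowup V T b → IsPreBlowup V T b' →
      IsPreBlowup V T (fun s => b' (b s))) ∧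
    (∀ b : ↥(SatSub V T) → ↥(SatSub V T), IsPreBlowup V T b →
      ∃ n : ℕ, 0 < n ∧ IsPreBlowup V T b^[n] ∧ ∀ s, b^[n] (b^[n] s) = b^[n] s) := by
  refine ⟨fun b b' hb hb' => hb.comp hb', fun b hb => ?_⟩
  have : Finite (Function.End ↥(SatSub V T)) := inferInstanceAs (Finite (_ → _))
  obtain ⟨n, hn, hidem⟩ := exists_pos_isIdempotentElem_pow (M := Function.End ↥(SatSub V T)) b
  exact ⟨n, hn, hb.iterate hn, congrFun hidem⟩
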